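/- Let (K, v, δ) be a valued-differential field that is henselian as a pure valued field. Suppose K satisfies the axiom scheme (DL) for irreducible differential polynomials: for every irreducible f ∈ K{x} of order n, every ā ∈ K^{n+1} with f_alg(ā) = 0 and s(f)_alg(ā) ≠ 0, and every γ ∈ vK, there exists b ∈ K with f(b) = 0 and v(δ^i(b) − a_i) > γ for all i ≤ n. Then K satisfies (DL) for all (not necessarily irreducible) differential polynomials f ∈ K{x}. -/

import Mathlib

/-!
`K{x}` is modelled as `MvPolynomial ℕ K` (variable `i` stands for
`x^(i)`), the order of `f` is `f.vars.sup id`, the separant is `pderiv (ord f) f`, and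
`f(b) = eval (fun i => δ^[i] b) f`.  Multiplicative valuations: the additive condition
`v(δ^i(b) − a_i) > γ` for `γ ∈ vK` becomes `v (δ^[i] b - a i) < v c` for `c ∈ K^×`, and
henselianity of `(K, v)` is `HenselianLocalRing` of the valuation subring.

If `f(ā) = 0` and the separant does not vanish at `ā`, then in any factorisation `f = g h`
exactly one factor vanishes at `ā`, say `g`, and by the Leibniz rule `s(f)(ā) = ∂g/∂xₙ(ā) · h(ā)`.
Descending through a factorisation into irreducibles yields an irreducible factor `g` of `f`
with `g(ā) = 0` and `∂g/∂xₙ(ā) ≠ 0`. Then `xₙ` occurs in `g`, while every variable of `g`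
occurs in `f`, so `ord g = n`; the axiom for `g` gives a differential root of `g`, hence of `f`.
-/

open MvPolynomial

noncomputable def dpOrder {K : Type*} [CommRing K] (f : MvPolynomial ℕ K) : ℕ :=
  f.vars.sup id

namespace MvPolynomial

variable {σ R : Type*} [CommRing R]

theorem eval_pderiv_mul_of_eval_eq_zero {a : σ → R} {g : MvPolynomial σ R} (h : MvPolynomial σ R)
    (hg : eval a g = 0) (i : σ) :
    eval a (pderiv i (g * h)) = eval a (pderiv i g) * eval a h := by
  simp [hg, mul_comm]

theorem exists_irreducible_dvd_of_eval_pderiv_ne_zero [IsDomain R] [UniqueFactorizationMonoid R]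
    {a : σ → R} {i : σ} (f : MvPolynomial σ R) (hf : eval a f = 0)
    (hsep : eval a (pderiv i f) ≠ 0) :
    ∃ g, Irreducible g ∧ g ∣ f ∧ eval a g = 0 ∧ eval a (pderiv i g) ≠ 0 := by
  induction f using WfDvdMonoid.induction_on_irreducible with
  | zero => simp at hsep
  | unit u hu => exact absurd hf ((hu.map (eval a)).ne_zero)
  | mul q p _ hp ih =>
    by_cases hpa : eval a p = 0
    · rw [eval_pderiv_mul_of_eval_eq_zero q hpa] at hsep
      exact ⟨p, hp, dvd_mul_right p q, hpa, left_ne_zero_of_mul hsep⟩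
    · have hqa : eval a q = 0 := by
        simpa [hpa] using hf
      rw [mul_comm, eval_pderiv_mul_of_eval_eq_zero p hqa] at hsep
      obtain ⟨g, hg, hgq, hga, hgsep⟩ := ih hqa (left_ne_zero_of_mul hsep)
      exact ⟨g, hg, hgq.mul_left p, hga, hgsep⟩

theorem vars_subset_of_dvd [IsDomain R] {f g : MvPolynomial σ R} (hgf : g ∣ f) (hf : f ≠ 0) :
    g.vars ⊆ f.vars := by
  classical
  obtain ⟨h, rfl⟩ := hgf
  rw [vars_def, vars_def, degrees_mul_eq (left_ne_zero_of_mul hf) (right_ne_zero_of_mul hf),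
    Multiset.toFinset_add]
  exact Finset.subset_union_left

end MvPolynomial

theorem dpOrder_le_of_dvd {R : Type*} [CommRing R] [IsDomain R] {f g : MvPolynomial ℕ R}
    (hgf : g ∣ f) (hf : f ≠ 0) : dpOrder g ≤ dpOrder f :=
  Finset.sup_mono (vars_subset_of_dvd hgf hf)

theorem le_dpOrder_of_pderiv_ne_zero {R : Type*} [CommRing R] {g : MvPolynomial ℕ R} {n : ℕ}
    (h : pderiv n g ≠ 0) : n ≤ dpOrder g :=
  Finset.le_sup (f := id) (by_contra fun hn => h (pderiv_eq_zero_of_notMem_vars hn))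

theorem statement12_general {K Γ₀ : Type*} [Field K]
    [LinearOrderedCommGroupWithZero Γ₀] (v : Valuation K Γ₀)
    (δ : K → K)
    (hirr : ∀ f : MvPolynomial ℕ K, Irreducible f → ∀ a : ℕ → K,
      eval a f = 0 → eval a (pderiv (dpOrder f) f) ≠ 0 →
      ∀ c : K, c ≠ 0 → ∃ b : K,
        eval (fun i => δ^[i] b) f = 0 ∧
        ∀ i ≤ dpOrder f, v (δ^[i] b - a i) < v c) :
    ∀ f : MvPolynomial ℕ K, ∀ a : ℕ → K,
      eval a f = 0 → eval a (pderiv (dpOrder f) f) ≠ 0 →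
      ∀ c : K, c ≠ 0 → ∃ b : K,
        eval (fun i => δ^[i] b) f = 0 ∧
        ∀ i ≤ dpOrder f, v (δ^[i] b - a i) < v c := by
  intro f a hfa hsep c hc
  obtain ⟨g, hg, hgf, hga, hgsep⟩ := exists_irreducible_dvd_of_eval_pderiv_ne_zero f hfa hsep
  have hf0 : f ≠ 0 := by
    rintro rfl
    simp at hsep
  have hord : dpOrder g = dpOrder f :=
    le_antisymm (dpOrder_le_of_dvd hgf hf0)
      (le_dpOrder_of_pderiv_ne_zero fun h => hgsep (by rw [h, map_zero]))
  obtain ⟨b, hgb, hb⟩ := hirr g hg a hga (hord ▸ hgsep) c hc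
  obtain ⟨q, rfl⟩ := hgf
  exact ⟨b, by rw [eval_mul, hgb, zero_mul], hord ▸ hb⟩

theorem statement12 {K Γ₀ : Type*} [Field K] [CharZero K]
    [LinearOrderedCommGroupWithZero Γ₀] (v : Valuation K Γ₀)
    (hH : HenselianLocalRing ↥v.valuationSubring)
    (δ : K → K) (hδadd : ∀ x y, δ (x + y) = δ x + δ y)
    (hδmul : ∀ x y, δ (x * y) = δ x * y + x * δ y)
    (hirr : ∀ f : MvPolynomial ℕ K, Irreducible f → ∀ a : ℕ → K,
      eval a f = 0 → eval a (pderiv (dpOrder f) f) ≠ 0 →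
      ∀ c : K, c ≠ 0 → ∃ b : K,
        eval (fun i => δ^[i] b) f = 0 ∧
        ∀ i ≤ dpOrder f, v (δ^[i] b - a i) < v c) :
    ∀ f : MvPolynomial ℕ K, ∀ a : ℕ → K,
      eval a f = 0 → eval a (pderiv (dpOrder f) f) ≠ 0 →
      ∀ c : K, c ≠ 0 → ∃ b : K,
        eval (fun i => δ^[i] b) f = 0 ∧
        ∀ i ≤ dpOrder f, v (δ^[i] b - a i) < v c :=
  statement12_general v δ hirr
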